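/- Let X be a random variable in the class 𝒟 with distribution function F and quantile function Q, and for v ∈ (0,1) let X*_v be the random variable with distribution function F*_v(x) = Q(vx)/Q(v), 0 < x < 1. Then X*_v ≤_st X*_w for all 0 < v < w < 1 if, and only if, the function x ↦ x·τ(x) is decreasing on (0, +∞), where τ(x) = (d/dx) log F(x) is the reversed hazard rate function of X. -/

import Mathlib

open MeasureTheory Set Filter

noncomputable section

variable {Ω : Type*} [MeasurableSpace Ω]

/-- Cumulative distribution function of the random variable `X` under `ℙ`. -/
def distFun (ℙ : Measure Ω) (X : Ω → ℝ) (x : ℝ) : ℝ :=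
  (ℙ {ω | X ω ≤ x}).toReal

/-- Survival (complementary distribution) function of `X` under `ℙ`. -/
def survFun (ℙ : Measure Ω) (X : Ω → ℝ) (x : ℝ) : ℝ :=
  (ℙ {ω | x < X ω}).toReal

/-- Quantile function `Q(u) = inf {x : ℝ | F(x) ≥ u}`. -/
def quantileFun (ℙ : Measure Ω) (X : Ω → ℝ) (u : ℝ) : ℝ :=
  sInf {x : ℝ | u ≤ distFun ℙ X x}

/-- Quantile density function `q(u) = Q'(u)`. -/
def quantileDens (ℙ : Measure Ω) (X : Ω → ℝ) : ℝ → ℝ :=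
  deriv (quantileFun ℙ X)

/-- The class `𝒟` of absolutely continuous random variables with finite mean whose
quantile function vanishes at `0+` and is differentiable on `(0,1)`.  (As noted in
the paper, such random variables are nonnegative with finite nonzero mean.) -/
structure MemD (ℙ : Measure Ω) (X : Ω → ℝ) : Prop where
  meas : Measurable X
  absCont : ℙ.map X ≪ (volume : Measure ℝ)
  integrable : Integrable X ℙ
  quantile_zero : Tendsto (quantileFun ℙ X) (nhdsWithin 0 (Ioi 0)) (nhds 0)
  diff : ∀ u ∈ Ioo (0:ℝ) 1, DifferentiableAt ℝ (quantileFun ℙ X) u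
  nonneg : ∀ᵐ ω ∂ℙ, 0 ≤ X ω
  mean_pos : 0 < ∫ ω, X ω ∂ℙ

/-- The Lorenz curve `L(p) = (1/E[X]) ∫₀ᵖ Q(u) du` of `X`. -/
def lorenz (ℙ : Measure Ω) (X : Ω → ℝ) (p : ℝ) : ℝ :=
  (∫ ω, X ω ∂ℙ)⁻¹ * ∫ u in (0:ℝ)..p, quantileFun ℙ X u

/-- `Z` takes values in `(0,1)` and has probability density `f` there. -/
def HasDensityOn01 (ℙ : Measure Ω) (Z : Ω → ℝ) (f : ℝ → ℝ) : Prop :=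
  (∀ ω, Z ω ∈ Ioo (0:ℝ) 1) ∧
    ∀ t ∈ Icc (0:ℝ) 1, distFun ℙ Z t = ∫ u in (0:ℝ)..t, f u

/-- Conditional value-at-risk `CVaR[X;p] = (1/(1-p)) ∫_p¹ (Q(t) - Q(p)) dt`. -/
def cvar (ℙ : Measure Ω) (X : Ω → ℝ) (p : ℝ) : ℝ :=
  (1 - p)⁻¹ * ∫ t in p..(1:ℝ), (quantileFun ℙ X t - quantileFun ℙ X p)

/-- Average value-at-risk `AVaR[X;v] = (1/v) ∫₀ᵛ Q(u) du`. -/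
def avar (ℙ : Measure Ω) (X : Ω → ℝ) (v : ℝ) : ℝ :=
  v⁻¹ * ∫ u in (0:ℝ)..v, quantileFun ℙ X u

/-- Generalized binomial coefficient `C(α,k) = α(α-1)⋯(α-k+1)/k!`. -/
def genBinom (α : ℝ) (k : ℕ) : ℝ :=
  (∏ i ∈ Finset.range k, (α - (i : ℝ))) / (Nat.factorial k : ℝ)

/-!
Write `F`, `Q`, `q` for the distribution, quantile and quantile density functions of `X`, and
`g(u) = u q(u) / Q(u)` for the elasticity of `Q`. As `X*_v` has distribution function
`x ↦ Q(vx) / Q(v)`, the ordering says that `t ↦ Q(tx) / Q(t)` is antitone on `(0,1)` for every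
`x ∈ (0,1)`; the derivative of this ratio has the sign of `g(tx) - g(t)`, so the ordering holds
iff `g` is monotone on `(0,1)`. On the other side, `F` inverts `Q` on `{0 < F < 1}`, hence
`x τ(x) = 1 / g(F(x))` there, while `x τ(x) = 0` once `F(x) = 1` (a maximum of `log F`). So
`x τ(x)` is antitone iff `1 / g` is, iff `g` is monotone: where `q` vanishes, both `g` and the
junk value of `1 / g` are `0`, and the mean value theorem supplies points with `q > 0` on both
sides, which rules this out under either condition.
-/

open scoped Topology
open ProbabilityTheory (cdf measure_cdf tendsto_cdf_atTop tendsto_cdf_atBot cdf_eq_real)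

lemma ProbabilityTheory.continuous_cdf (μ : Measure ℝ) [IsProbabilityMeasure μ]
    [NullSingletonClass μ] :
    Continuous (cdf μ) := by
  refine continuous_iff_continuousAt.2 fun a => ?_
  have hleft : Function.leftLim (cdf μ) a = cdf μ a := by
    have h := (cdf μ).measure_singleton a
    rw [measure_cdf, measure_singleton, eq_comm, ENNReal.ofReal_eq_zero] at h
    exact le_antisymm ((cdf μ).mono.leftLim_le le_rfl) (by linarith)
  rw [(cdf μ).mono.continuousAt_iff_leftLim_eq_rightLim, hleft,
    ((cdf μ).right_continuous a).rightLim_eq]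

lemma Real.deriv_log_comp_of_pos {f : ℝ → ℝ} {x : ℝ} (hf : ContinuousAt f x)
    (hx : 0 < f x) :
    deriv (fun y => Real.log (f y)) x = deriv f x / f x := by
  by_cases hd : DifferentiableAt ℝ f x
  · exact deriv.log hd hx.ne'
  have hlog : ¬ DifferentiableAt ℝ (fun y => Real.log (f y)) x := by
    intro hlog
    have hexp : (fun y => Real.exp (Real.log (f y))) =ᶠ[𝓝 x] f := by
      filter_upwards [Filter.Tendsto.eventually_const_lt hx hf] with y hy
      exact Real.exp_log hy
    exact hd ((Real.differentiable_exp _).comp x hlog |>.congr_of_eventuallyEq hexp.symm)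
  rw [deriv_zero_of_not_differentiableAt hd, deriv_zero_of_not_differentiableAt hlog, zero_div]

lemma antitoneOn_iff_forall_nonpos_of_hasDerivAt {f f' : ℝ → ℝ} {D : Set ℝ}
    (hD : Convex ℝ D) (hDo : IsOpen D) (hf : ∀ t ∈ D, HasDerivAt f (f' t) t) :
    AntitoneOn f D ↔ ∀ t ∈ D, f' t ≤ 0 := by
  refine ⟨fun hanti t ht => ?_, fun hnonpos => ?_⟩
  · rw [← (hf t ht).deriv, ← derivWithin_of_isOpen hDo ht]
    exact hanti.derivWithin_nonpos
  · refine antitoneOn_of_deriv_nonpos hD (fun t ht => (hf t ht).continuousAt.continuousWithinAt)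
      (fun t ht => ?_) (fun t ht => ?_) <;> rw [hDo.interior_eq] at ht
    · exact (hf t ht).differentiableAt.differentiableWithinAt
    · exact (hf t ht).deriv ▸ hnonpos t ht

lemma mul_mem_Ioo_zero_one {s t : ℝ} (hs : s ∈ Ioo (0 : ℝ) 1) (ht : t ∈ Ioo (0 : ℝ) 1) :
    s * t ∈ Ioo (0 : ℝ) 1 :=
  ⟨mul_pos hs.1 ht.1, mul_lt_one_of_nonneg_of_lt_one_left hs.1.le hs.2 ht.2.le⟩

variable {ℙ : Measure Ω} {X : Ω → ℝ}

lemma monotone_distFun [IsFiniteMeasure ℙ] : Monotone (distFun ℙ X) :=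
  fun _ _ hxy => measureReal_mono fun _ hω => le_trans hω hxy

lemma distFun_le_one [IsProbabilityMeasure ℙ] (x : ℝ) : distFun ℙ X x ≤ 1 :=
  measureReal_le_one

variable [IsProbabilityMeasure ℙ]

lemma distFun_eq_cdf (hm : Measurable X) : distFun ℙ X = cdf (ℙ.map X) := by
  have := Measure.isProbabilityMeasure_map (μ := ℙ) hm.aemeasurable
  ext x
  rw [cdf_eq_real, measureReal_def, Measure.map_apply hm measurableSet_Iic]
  rfl

lemma continuous_distFun (hm : Measurable X) (hac : ℙ.map X ≪ volume) :
    Continuous (distFun ℙ X) := by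
  have := Measure.isProbabilityMeasure_map (μ := ℙ) hm.aemeasurable
  have : NullSingletonClass (ℙ.map X) := ⟨fun a => hac (Real.volume_singleton)⟩
  rw [distFun_eq_cdf hm]
  exact ProbabilityTheory.continuous_cdf _

lemma nonempty_setOf_le_distFun (hm : Measurable X) {u : ℝ} (hu : u < 1) :
    {x | u ≤ distFun ℙ X x}.Nonempty := by
  rw [distFun_eq_cdf hm]
  have := Measure.isProbabilityMeasure_map (μ := ℙ) hm.aemeasurable
  exact ((tendsto_cdf_atTop _).eventually_const_le hu).exists

lemma bddBelow_setOf_le_distFun (hm : Measurable X) {u : ℝ} (hu : 0 < u) :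
    BddBelow {x | u ≤ distFun ℙ X x} := by
  rw [distFun_eq_cdf hm]
  have := Measure.isProbabilityMeasure_map (μ := ℙ) hm.aemeasurable
  obtain ⟨b, hb⟩ := eventually_atBot.1 ((tendsto_cdf_atBot _).eventually_lt_const hu)
  exact ⟨b, fun x hx => le_of_not_gt fun hxb => (hb x hxb.le).not_ge hx⟩

lemma distFun_quantileFun (hm : Measurable X) (hac : ℙ.map X ≪ volume) {u : ℝ}
    (hu : u ∈ Ioo 0 1) : distFun ℙ X (quantileFun ℙ X u) = u := by
  have hcont := continuous_distFun hm hac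
  have hbdd := bddBelow_setOf_le_distFun (ℙ := ℙ) hm hu.1
  refine le_antisymm ?_ ((isClosed_le continuous_const hcont).csInf_mem
    (nonempty_setOf_le_distFun hm hu.2) hbdd)
  refine le_of_tendsto (hcont.continuousWithinAt (s := Iio (quantileFun ℙ X u)))
    (eventually_nhdsWithin_of_forall fun y hy => ?_)
  exact (not_le.1 fun h => (csInf_le hbdd h).not_gt hy).le

lemma strictMonoOn_quantileFun (hm : Measurable X) (hac : ℙ.map X ≪ volume) :
    StrictMonoOn (quantileFun ℙ X) (Ioo 0 1) := by
  intro u hu v hv huv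
  by_contra! h
  have := monotone_distFun (ℙ := ℙ) (X := X) h
  rw [distFun_quantileFun hm hac hu, distFun_quantileFun hm hac hv] at this
  exact this.not_gt huv

lemma mul_deriv_log_distFun_of_eq_one {x : ℝ} (hFx : distFun ℙ X x = 1) :
    x * deriv (fun y => Real.log (distFun ℙ X y)) x = 0 := by
  have hmax : IsLocalMax (fun y => Real.log (distFun ℙ X y)) x :=
    Filter.Eventually.of_forall fun y => by
      show Real.log (distFun ℙ X y) ≤ Real.log (distFun ℙ X x)
      rw [hFx, Real.log_one]
      exact Real.log_nonpos measureReal_nonneg (distFun_le_one y)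
  rw [hmax.deriv_eq_zero, mul_zero]

def quantileElasticity (ℙ : Measure Ω) (X : Ω → ℝ) (u : ℝ) : ℝ :=
  u * quantileDens ℙ X u / quantileFun ℙ X u

section MemD

variable (hX : MemD ℙ X)
include hX

lemma quantileFun_nonneg {u : ℝ} (hu : u ∈ Ioo 0 1) : 0 ≤ quantileFun ℙ X u := by
  refine le_of_tendsto hX.quantile_zero ?_
  filter_upwards [Ioo_mem_nhdsGT hu.1] with t ht
  exact (strictMonoOn_quantileFun hX.meas hX.absCont ⟨ht.1, ht.2.trans hu.2⟩ hu ht.2).le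

lemma quantileFun_pos {u : ℝ} (hu : u ∈ Ioo 0 1) : 0 < quantileFun ℙ X u := by
  have hu2 : u / 2 ∈ Ioo (0 : ℝ) 1 := ⟨by linarith [hu.1], by linarith [hu.2]⟩
  exact (quantileFun_nonneg hX hu2).trans_lt
    (strictMonoOn_quantileFun hX.meas hX.absCont hu2 hu (by linarith [hu.1]))

lemma distFun_pos {x : ℝ} (hx : 0 < x) : 0 < distFun ℙ X x := by
  obtain ⟨u, hux, hu⟩ := ((hX.quantile_zero.eventually_lt_const hx).and
    (Ioo_mem_nhdsGT (zero_lt_one' ℝ))).exists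
  calc 0 < u := hu.1
    _ = distFun ℙ X (quantileFun ℙ X u) := (distFun_quantileFun hX.meas hX.absCont hu).symm
    _ ≤ distFun ℙ X x := monotone_distFun hux.le

-- `Q` has no jumps, so `F` has no flat pieces strictly inside `{0 < F < 1}`.
lemma quantileFun_distFun {x : ℝ} (hx : 0 < x) (hFx : distFun ℙ X x < 1) :
    quantileFun ℙ X (distFun ℙ X x) = x := by
  have hFx' : distFun ℙ X x ∈ Ioo 0 1 := ⟨distFun_pos hX hx, hFx⟩
  refine le_antisymm (csInf_le (bddBelow_setOf_le_distFun hX.meas hFx'.1)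
    (le_refl (distFun ℙ X x))) ?_
  refine ge_of_tendsto
    ((hX.diff _ hFx').continuousAt.continuousWithinAt (s := Ioi (distFun ℙ X x))) ?_
  filter_upwards [Ioo_mem_nhdsGT hFx] with t ht
  refine le_csInf (nonempty_setOf_le_distFun hX.meas ht.2) fun y hy => ?_
  by_contra! hyx
  exact (ht.1.trans_le hy).not_ge (monotone_distFun hyx.le)

lemma quantileDens_nonneg {u : ℝ} (hu : u ∈ Ioo 0 1) : 0 ≤ quantileDens ℙ X u := by
  rw [quantileDens, ← derivWithin_of_isOpen isOpen_Ioo hu]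
  exact (strictMonoOn_quantileFun hX.meas hX.absCont).monotoneOn.derivWithin_nonneg

lemma deriv_distFun_quantileFun {u : ℝ} (hu : u ∈ Ioo 0 1) :
    deriv (distFun ℙ X) (quantileFun ℙ X u) = (quantileDens ℙ X u)⁻¹ := by
  have hFQ := distFun_quantileFun hX.meas hX.absCont hu
  have hQ : HasDerivAt (quantileFun ℙ X) (quantileDens ℙ X u)
      (distFun ℙ X (quantileFun ℙ X u)) := by rw [hFQ]; exact (hX.diff u hu).hasDerivAt
  have hinv : ∀ᶠ y in 𝓝 (quantileFun ℙ X u), quantileFun ℙ X (distFun ℙ X y) = y := by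
    have hopen : IsOpen {y | 0 < y ∧ distFun ℙ X y < 1} :=
      isOpen_lt continuous_const continuous_id |>.inter
        (isOpen_lt (continuous_distFun hX.meas hX.absCont) continuous_const)
    filter_upwards [hopen.mem_nhds ⟨quantileFun_pos hX hu, hFQ.trans_lt hu.2⟩] with y hy
    exact quantileFun_distFun hX hy.1 hy.2
  by_cases hq : quantileDens ℙ X u = 0
  · rw [hq, inv_zero]
    exact deriv_zero_of_not_differentiableAt <|
      not_differentiableAt_of_local_left_inverse_hasDerivAt_zero (f := quantileFun ℙ X)
        (hq ▸ hQ) hinv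
  · exact (hQ.of_local_left_inverse
      (continuous_distFun hX.meas hX.absCont).continuousAt hq hinv).deriv

lemma quantileElasticity_nonneg {u : ℝ} (hu : u ∈ Ioo 0 1) : 0 ≤ quantileElasticity ℙ X u :=
  div_nonneg (mul_nonneg hu.1.le (quantileDens_nonneg hX hu)) (quantileFun_nonneg hX hu)

lemma exists_quantileElasticity_pos {a b : ℝ} (ha : 0 < a) (hab : a < b) (hb : b < 1) :
    ∃ ξ ∈ Ioo a b, 0 < quantileElasticity ℙ X ξ := by
  have hsub : Icc a b ⊆ Ioo 0 1 := Icc_subset_Ioo ha hb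
  obtain ⟨ξ, hξ, hslope⟩ :=
    exists_hasDerivAt_eq_slope (quantileFun ℙ X) (quantileDens ℙ X) hab
    (fun t ht => (hX.diff t (hsub ht)).continuousAt.continuousWithinAt)
    (fun t ht => (hX.diff t (hsub (Ioo_subset_Icc_self ht))).hasDerivAt)
  have hξ' : ξ ∈ Ioo 0 1 := hsub (Ioo_subset_Icc_self hξ)
  have hQ := strictMonoOn_quantileFun hX.meas hX.absCont (hsub (left_mem_Icc.2 hab.le))
    (hsub (right_mem_Icc.2 hab.le)) hab
  refine ⟨ξ, hξ, div_pos (mul_pos hξ'.1 ?_) (quantileFun_pos hX hξ')⟩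
  rw [hslope]
  exact div_pos (sub_pos.2 hQ) (sub_pos.2 hab)

lemma monotoneOn_quantileElasticity_iff :
    MonotoneOn (quantileElasticity ℙ X) (Ioo 0 1) ↔
      AntitoneOn (fun u => (quantileElasticity ℙ X u)⁻¹) (Ioo 0 1) := by
  constructor
  · intro hg
    have hpos : ∀ u ∈ Ioo (0 : ℝ) 1, 0 < quantileElasticity ℙ X u := by
      intro u hu
      obtain ⟨ξ, hξ, hgξ⟩ := exists_quantileElasticity_pos hX (half_pos hu.1)
        (half_lt_self hu.1) hu.2
      exact hgξ.trans_le (hg ⟨(half_pos hu.1).trans hξ.1, hξ.2.trans hu.2⟩ hu hξ.2.le)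
    exact fun u hu v hv huv => inv_anti₀ (hpos u hu) (hg hu hv huv)
  · intro hg
    have hpos : ∀ u ∈ Ioo (0 : ℝ) 1, 0 < quantileElasticity ℙ X u := by
      intro u hu
      obtain ⟨ξ, hξ, hgξ⟩ := exists_quantileElasticity_pos hX hu.1
        (by linarith [hu.2] : u < (u + 1) / 2) (by linarith [hu.2])
      have hξ' : ξ ∈ Ioo (0 : ℝ) 1 := ⟨hu.1.trans hξ.1, by linarith [hξ.2, hu.2]⟩
      exact inv_pos.1 ((inv_pos.2 hgξ).trans_le (hg hu hξ' hξ.1.le))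
    exact fun u hu v hv huv => (inv_le_inv₀ (hpos v hv) (hpos u hu)).1 (hg hu hv huv)

lemma mul_deriv_log_distFun {x : ℝ} (hx : 0 < x) (hFx : distFun ℙ X x < 1) :
    x * deriv (fun y => Real.log (distFun ℙ X y)) x =
      (quantileElasticity ℙ X (distFun ℙ X x))⁻¹ := by
  have hu : distFun ℙ X x ∈ Ioo 0 1 := ⟨distFun_pos hX hx, hFx⟩
  have hQ := quantileFun_distFun hX hx hFx
  have hdF := deriv_distFun_quantileFun hX hu
  rw [hQ] at hdF
  rw [Real.deriv_log_comp_of_pos (continuous_distFun hX.meas hX.absCont).continuousAt hu.1, hdF,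
    quantileElasticity, hQ, inv_div]
  ring

lemma mul_deriv_log_distFun_nonneg {x : ℝ} (hx : 0 < x) :
    0 ≤ x * deriv (fun y => Real.log (distFun ℙ X y)) x := by
  rcases (distFun_le_one (ℙ := ℙ) (X := X) x).lt_or_eq with hFx | hFx
  · rw [mul_deriv_log_distFun hX hx hFx]
    exact inv_nonneg.2 (quantileElasticity_nonneg hX ⟨distFun_pos hX hx, hFx⟩)
  · rw [mul_deriv_log_distFun_of_eq_one hFx]

lemma antitoneOn_mul_deriv_log_distFun_iff :
    AntitoneOn (fun x => x * deriv (fun y => Real.log (distFun ℙ X y)) x) (Ioi 0) ↔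
      AntitoneOn (fun u => (quantileElasticity ℙ X u)⁻¹) (Ioo 0 1) := by
  constructor
  · intro hT u hu v hv huv
    have hτQ : ∀ w ∈ Ioo (0 : ℝ) 1, quantileFun ℙ X w *
        deriv (fun y => Real.log (distFun ℙ X y)) (quantileFun ℙ X w) =
          (quantileElasticity ℙ X w)⁻¹ := fun w hw => by
      have hFQ := distFun_quantileFun hX.meas hX.absCont hw
      rw [mul_deriv_log_distFun hX (quantileFun_pos hX hw) (hFQ.trans_lt hw.2), hFQ]
    show (quantileElasticity ℙ X v)⁻¹ ≤ (quantileElasticity ℙ X u)⁻¹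
    rw [← hτQ u hu, ← hτQ v hv]
    exact hT (quantileFun_pos hX hu) (quantileFun_pos hX hv)
      ((strictMonoOn_quantileFun hX.meas hX.absCont).monotoneOn hu hv huv)
  · intro hg x hx y hy hxy
    have hFxy := monotone_distFun (ℙ := ℙ) (X := X) hxy
    rcases (distFun_le_one (ℙ := ℙ) (X := X) y).lt_or_eq with hFy | hFy
    · have hFx := hFxy.trans_lt hFy
      simp only [mul_deriv_log_distFun hX hx hFx, mul_deriv_log_distFun hX hy hFy]
      exact hg ⟨distFun_pos hX hx, hFx⟩ ⟨distFun_pos hX hy, hFy⟩ hFxy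
    · simp only [mul_deriv_log_distFun_of_eq_one hFy]
      exact mul_deriv_log_distFun_nonneg hX hx

lemma hasDerivAt_quantileFun_mul_div {x t : ℝ} (hx : x ∈ Ioo 0 1) (ht : t ∈ Ioo 0 1) :
    HasDerivAt (fun s => quantileFun ℙ X (s * x) / quantileFun ℙ X s)
      (quantileFun ℙ X (t * x) / (t * quantileFun ℙ X t) *
        (quantileElasticity ℙ X (t * x) - quantileElasticity ℙ X t)) t := by
  have htx := mul_mem_Ioo_zero_one ht hx
  have hnum : HasDerivAt (fun s => quantileFun ℙ X (s * x)) (quantileDens ℙ X (t * x) * x) t :=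
    HasDerivAt.comp t (h₂ := quantileFun ℙ X) (hX.diff _ htx).hasDerivAt
      (hasDerivAt_mul_const x)
  refine (hnum.div (hX.diff t ht).hasDerivAt (quantileFun_pos hX ht).ne').congr_deriv ?_
  have := quantileFun_pos hX htx
  have := quantileFun_pos hX ht
  have := ht.1
  unfold quantileElasticity quantileDens
  field_simp

lemma quantile_ratio_antitone_iff_monotoneOn_quantileElasticity :
    (∀ v w : ℝ, 0 < v → v < w → w < 1 → ∀ x ∈ Ioo (0 : ℝ) 1,
      quantileFun ℙ X (w * x) / quantileFun ℙ X w
        ≤ quantileFun ℙ X (v * x) / quantileFun ℙ X v) ↔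
      MonotoneOn (quantileElasticity ℙ X) (Ioo 0 1) := by
  have hratio : ∀ x ∈ Ioo (0 : ℝ) 1,
      AntitoneOn (fun t => quantileFun ℙ X (t * x) / quantileFun ℙ X t) (Ioo 0 1) ↔
        ∀ t ∈ Ioo (0 : ℝ) 1,
          quantileElasticity ℙ X (t * x) ≤ quantileElasticity ℙ X t := by
    intro x hx
    rw [antitoneOn_iff_forall_nonpos_of_hasDerivAt (convex_Ioo 0 1) isOpen_Ioo
      fun t ht => hasDerivAt_quantileFun_mul_div hX hx ht]
    refine forall₂_congr fun t ht => ?_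
    have hc : 0 < quantileFun ℙ X (t * x) / (t * quantileFun ℙ X t) :=
      div_pos (quantileFun_pos hX (mul_mem_Ioo_zero_one ht hx))
        (mul_pos ht.1 (quantileFun_pos hX ht))
    exact ⟨fun h => sub_nonpos.1 (nonpos_of_mul_nonpos_right h hc),
      fun h => mul_nonpos_of_nonneg_of_nonpos hc.le (sub_nonpos.2 h)⟩
  calc _ ↔ ∀ x ∈ Ioo (0 : ℝ) 1,
        AntitoneOn (fun t => quantileFun ℙ X (t * x) / quantileFun ℙ X t) (Ioo 0 1) := by
        refine ⟨fun h x hx v hv w hw hvw => ?_, fun h v w hv hvw hw x hx =>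
          h x hx ⟨hv, hvw.trans hw⟩ ⟨hv.trans hvw, hw⟩ hvw.le⟩
        rcases hvw.eq_or_lt with rfl | hvw
        · exact le_rfl
        · exact h v w hv.1 hvw hw.2 x hx
    _ ↔ ∀ x ∈ Ioo (0 : ℝ) 1, ∀ t ∈ Ioo (0 : ℝ) 1,
        quantileElasticity ℙ X (t * x) ≤ quantileElasticity ℙ X t := forall₂_congr hratio
    _ ↔ MonotoneOn (quantileElasticity ℙ X) (Ioo 0 1) := by
        refine ⟨fun h u hu v hv huv => ?_, fun h x hx t ht =>
          h (mul_mem_Ioo_zero_one ht hx) ht (mul_le_of_le_one_right ht.1.le hx.2.le)⟩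
        rcases huv.eq_or_lt with rfl | huv
        · exact le_rfl
        · simpa [mul_div_cancel₀ u hv.1.ne'] using
            h (u / v) ⟨div_pos hu.1 hv.1, (div_lt_one hv.1).2 huv⟩ v hv

end MemD

/-- Proposition 5.6.  `X*_v ≤_st X*_w` for all `0 < v < w < 1` iff
`x ↦ x τ(x)` is decreasing on `(0,∞)`, where `τ = (log F)'` is the reversed hazard
rate function of `X`. -/
theorem stmt19 (ℙ : Measure Ω) [IsProbabilityMeasure ℙ] (X : Ω → ℝ)
    (hX : MemD ℙ X) :
    (∀ v w : ℝ, 0 < v → v < w → w < 1 →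
      ∀ x ∈ Ioo (0:ℝ) 1,
        quantileFun ℙ X (w * x) / quantileFun ℙ X w
          ≤ quantileFun ℙ X (v * x) / quantileFun ℙ X v)
    ↔ AntitoneOn
        (fun x => x * deriv (fun y => Real.log (distFun ℙ X y)) x) (Ioi 0) := by
  rw [quantile_ratio_antitone_iff_monotoneOn_quantileElasticity hX,
    antitoneOn_mul_deriv_log_distFun_iff hX, monotoneOn_quantileElasticity_iff hX]
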